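/- Let q ≥ 2, let P be a positive integer, let χ range over all Dirichlet characters mod P, and let (v_n) be a complex sequence. Then Σ*_{χ mod P, χ primitive} |Σ_{n ≤ x} v_n χ(n)|² ≤ (φ(P)/P) · Σ_{a mod P, gcd(a,P)=1} |Σ_{n ≤ x} v_n e(an/P)|², where the left sum is over primitive characters modulo P. -/

import Mathlib

/-!
With `T a = ∑ n, v n * e (a n / P)`, the Gauss sum identity `∑ a, χ a e(an/P) = χ̄(n) τ(χ)` for
primitive `χ` gives `∑ n, v n χ n = τ(χ̄)⁻¹ ∑ a, T a χ̄ a`, and `|τ(χ̄)|² = P`. Dropping the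
primitivity condition only enlarges the sum, and orthogonality of the characters evaluates
`∑ χ, |∑ a, T a χ a|²` as `φ(P) ∑_{(a,P)=1} |T a|²`. Both this orthogonality and `|τ(χ)|² = P`
are instances of Parseval's identity for an orthogonal family of functions; for the Gauss sum
it is applied to the additive characters `a ↦ e(na/P)` with coefficients `χ a`.
-/

open Finset

noncomputable def e (α : ℝ) : ℂ := Complex.exp (2 * Real.pi * Complex.I * α)

open ComplexConjugate

section Parseval
variable {𝕜 ι α : Type*} [RCLike 𝕜] [Fintype ι] [Fintype α] [DecidableEq α]

theorem sum_norm_sq_sum_mul_eq_of_orthogonal (φ : ι → α → 𝕜) (w : α → ℝ)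
    (hφ : ∀ a b, ∑ i, φ i a * conj (φ i b) = if a = b then (w a : 𝕜) else 0) (f : α → 𝕜) :
    ∑ i, ‖∑ a, f a * φ i a‖ ^ 2 = ∑ a, w a * ‖f a‖ ^ 2 := by
  apply RCLike.ofReal_injective (K := 𝕜)
  calc ((∑ i, ‖∑ a, f a * φ i a‖ ^ 2 : ℝ) : 𝕜)
      = ∑ a, ∑ b, f a * conj (f b) * ∑ i, φ i a * conj (φ i b) := by
        push_cast
        simp_rw [← RCLike.mul_conj, map_sum, map_mul, sum_mul_sum, mul_sum]
        rw [sum_comm]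
        refine sum_congr rfl fun a _ => ?_
        rw [sum_comm]
        refine sum_congr rfl fun b _ => sum_congr rfl fun i _ => by ring
    _ = ((∑ a, w a * ‖f a‖ ^ 2 : ℝ) : 𝕜) := by
        push_cast
        simp_rw [hφ, mul_ite, mul_zero, sum_ite_eq, mem_univ, if_true, RCLike.mul_conj]
        exact sum_congr rfl fun a _ => by ring
end Parseval

namespace AddChar
variable {R : Type*} [CommRing R] [Fintype R] [DecidableEq R] {ψ : AddChar R ℂ}

theorem sum_mulShift_mul_conj (hψ : ψ.IsPrimitive) (a b : R) :
    ∑ n, ψ (n * a) * conj (ψ (n * b)) = if a = b then (Fintype.card R : ℂ) else 0 := by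
  have hchar : 0 < ringChar R := Nat.pos_of_ne_zero (CharP.char_ne_zero_of_finite R _)
  simp_rw [starComp_apply hchar, inv_apply, ← map_add_eq_mul, ← mul_neg, ← mul_add,
    ← sub_eq_add_neg, sum_mulShift _ hψ, sub_eq_zero, Nat.cast_ite, Nat.cast_zero]

theorem sum_norm_sq_sum_mul_mulShift (hψ : ψ.IsPrimitive) (f : R → ℂ) :
    ∑ n, ‖∑ a, f a * ψ (n * a)‖ ^ 2 = Fintype.card R * ∑ a, ‖f a‖ ^ 2 := by
  rw [sum_norm_sq_sum_mul_eq_of_orthogonal _ (fun _ => Fintype.card R), mul_sum]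
  intro a b
  rw [sum_mulShift_mul_conj hψ]
  split_ifs <;> simp
end AddChar

namespace DirichletCharacter
variable {N : ℕ} {χ : DirichletCharacter ℂ N}

theorem IsPrimitive.inv (hχ : χ.IsPrimitive) : χ⁻¹.IsPrimitive :=
  (conductor_inv χ).trans hχ

theorem norm_inv_apply (χ : DirichletCharacter ℂ N) (a : ZMod N) : ‖χ⁻¹ a‖ = ‖χ a‖ := by
  rw [← MulChar.star_apply', norm_star]

variable [NeZero N]

theorem sum_mul_conj_eq (a b : ZMod N) :
    ∑ χ : DirichletCharacter ℂ N, χ a * conj (χ b) =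
      if a = b then (if IsUnit a then (N.totient : ℂ) else 0) else 0 := by
  by_cases hb : IsUnit b
  · obtain ⟨u, rfl⟩ := hb
    have hconj (χ : DirichletCharacter ℂ N) : conj (χ u) = χ ↑u⁻¹ := by
      rw [starRingEnd_apply, MulChar.star_apply', MulChar.inv_apply, Ring.inverse_unit]
    simp_rw [hconj, ← map_mul, sum_characters_eq, Units.mul_inv_eq_iff_eq_mul, one_mul]
    split_ifs <;> simp_all
  · simp only [MulChar.map_nonunit _ hb, map_zero, mul_zero, sum_const_zero]
    split_ifs with h <;> simp_all

theorem sum_norm_sq_sum_mul (f : ZMod N → ℂ) :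
    ∑ χ : DirichletCharacter ℂ N, ‖∑ a, f a * χ a‖ ^ 2 =
      N.totient * ∑ a with IsUnit a, ‖f a‖ ^ 2 := by
  rw [sum_norm_sq_sum_mul_eq_of_orthogonal (fun (χ : DirichletCharacter ℂ N) a => χ a)
    (fun a => if IsUnit a then N.totient else 0), sum_filter, mul_sum]
  · exact sum_congr rfl fun a _ => by split_ifs <;> simp
  · intro a b
    rw [sum_mul_conj_eq]
    split_ifs <;> simp_all

theorem IsPrimitive.sum_mul_stdAddChar_mul (hχ : χ.IsPrimitive) (n : ZMod N) :
    ∑ a, χ a * ZMod.stdAddChar (n * a) = χ⁻¹ n * gaussSum χ ZMod.stdAddChar := by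
  rw [← gaussSum_mulShift_of_isPrimitive _ hχ]
  rfl

theorem IsPrimitive.norm_sq_gaussSum (hχ : χ.IsPrimitive) :
    ‖gaussSum χ ZMod.stdAddChar‖ ^ 2 = N := by
  have hparseval := AddChar.sum_norm_sq_sum_mul_mulShift (ZMod.isPrimitive_stdAddChar N) χ
  simp_rw [hχ.sum_mul_stdAddChar_mul, norm_mul, mul_pow, norm_inv_apply, ← sum_mul,
    ZMod.card] at hparseval
  have hpos : 0 < ∑ a, ‖χ a‖ ^ 2 :=
    lt_of_lt_of_le (by simp) (single_le_sum (fun a _ => sq_nonneg ‖χ a‖) (mem_univ 1))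
  exact mul_left_cancel₀ hpos.ne' (hparseval.trans (mul_comm _ _))

theorem IsPrimitive.sum_sum_stdAddChar_mul {ι : Type*} (hχ : χ.IsPrimitive) (s : Finset ι)
    (v : ι → ℂ) (m : ι → ZMod N) :
    ∑ a, (∑ n ∈ s, v n * ZMod.stdAddChar (m n * a)) * χ a =
      gaussSum χ ZMod.stdAddChar * ∑ n ∈ s, v n * χ⁻¹ (m n) := by
  simp_rw [sum_mul, mul_sum]
  rw [sum_comm]
  refine sum_congr rfl fun n _ => ?_
  rw [mul_left_comm, mul_comm (gaussSum _ _), ← hχ.sum_mul_stdAddChar_mul, mul_sum]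
  exact sum_congr rfl fun a _ => by ring

theorem IsPrimitive.norm_sq_sum_mul_eq {ι : Type*} (hχ : χ.IsPrimitive) (s : Finset ι)
    (v : ι → ℂ) (m : ι → ZMod N) :
    ‖∑ n ∈ s, v n * χ (m n)‖ ^ 2 =
      ‖∑ a, (∑ n ∈ s, v n * ZMod.stdAddChar (m n * a)) * χ⁻¹ a‖ ^ 2 / N := by
  rw [hχ.inv.sum_sum_stdAddChar_mul, inv_inv, norm_mul, mul_pow, hχ.inv.norm_sq_gaussSum,
    mul_div_cancel_left₀ _ (Nat.cast_ne_zero.mpr (NeZero.ne N))]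

end DirichletCharacter

theorem ZMod.sum_filter_coprime_range {M : Type*} [AddCommMonoid M] (N : ℕ) [NeZero N]
    (g : ZMod N → M) :
    ∑ a ∈ range N with a.Coprime N, g a = ∑ a : ZMod N with IsUnit a, g a := by
  refine sum_nbij' (↑) ZMod.val (fun a ha => ?_) (fun b hb => ?_) (fun a ha => ?_)
    (fun b _ => ZMod.natCast_zmod_val b) (fun _ _ => rfl)
  · exact mem_filter.mpr ⟨mem_univ _, (ZMod.isUnit_iff_coprime a N).mpr (mem_filter.mp ha).2⟩
  · simp_all [ZMod.val_lt, ← ZMod.isUnit_iff_coprime]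
  · exact ZMod.val_cast_of_lt (mem_range.mp (mem_filter.mp ha).1)

theorem ZMod.stdAddChar_natCast_mul_natCast {N : ℕ} [NeZero N] (n a : ℕ) :
    ZMod.stdAddChar ((n : ZMod N) * (a : ZMod N)) = e (a * n / N) := by
  rw [← Nat.cast_mul, ← Int.cast_natCast, ZMod.stdAddChar_coe, e]
  push_cast
  ring_nf

open scoped Classical in
/-- Reduction of the multiplicative large sieve to the additive one for a single modulus `P`:
the sum over primitive characters mod `P` of `|∑_{n ≤ x} v_n χ(n)|²` is at most
`(φ(P)/P) ∑_{a mod P, (a,P)=1} |∑_{n ≤ x} v_n e(an/P)|²`. -/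
theorem mult_large_sieve_single_modulus (P : ℕ) (hP : 2 ≤ P) (x : ℕ) (v : ℕ → ℂ) :
    ∑ χ ∈ Finset.univ.filter (fun χ : DirichletCharacter ℂ P => χ.IsPrimitive),
        ‖∑ n ∈ Finset.Icc 1 x, v n * χ (n : ZMod P)‖ ^ 2
      ≤ ((Nat.totient P : ℝ) / P) *
        ∑ a ∈ (Finset.range P).filter (fun a => Nat.Coprime a P),
          ‖∑ n ∈ Finset.Icc 1 x, v n * e ((a : ℝ) * n / P)‖ ^ 2 := by
  have : NeZero P := ⟨by omega⟩
  set T : ZMod P → ℂ := fun a => ∑ n ∈ Icc 1 x, v n * ZMod.stdAddChar ((n : ZMod P) * a)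
  calc ∑ χ ∈ univ.filter (fun χ : DirichletCharacter ℂ P => χ.IsPrimitive),
        ‖∑ n ∈ Icc 1 x, v n * χ n‖ ^ 2
      = ∑ χ ∈ univ.filter (fun χ : DirichletCharacter ℂ P => χ.IsPrimitive),
          ‖∑ a, T a * χ⁻¹ a‖ ^ 2 / P :=
        sum_congr rfl fun χ hχ => (mem_filter.mp hχ).2.norm_sq_sum_mul_eq _ _ _
    _ ≤ ∑ χ : DirichletCharacter ℂ P, ‖∑ a, T a * χ⁻¹ a‖ ^ 2 / P :=
        sum_le_sum_of_subset_of_nonneg (filter_subset _ _) fun _ _ _ => by positivity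
    _ = (∑ χ : DirichletCharacter ℂ P, ‖∑ a, T a * χ a‖ ^ 2) / P := by
        rw [← sum_div]
        exact congrArg (· / _) (Fintype.sum_equiv (Equiv.inv _) _ _ fun _ => rfl)
    _ = (P.totient / P) * ∑ a : ZMod P with IsUnit a, ‖T a‖ ^ 2 := by
        rw [DirichletCharacter.sum_norm_sq_sum_mul, mul_div_right_comm]
    _ = _ := by
        rw [← ZMod.sum_filter_coprime_range]
        simp_rw [T, ZMod.stdAddChar_natCast_mul_natCast]
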